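/- arXiv:math/0403528 — 5 statements merged into one kernel-verified Lean document; each statement's English description precedes it below -/
import Mathlib

section
/- The complex quartic polynomial x^4 + a1*x^3 + a2*x^2 + a3*x + a4 with a1 ≠ 0 has two double roots if and only if 4*a1*a2 = a1^3 + 8*a3 and a1^2*a4 = a3^2; in this case the double roots are -a1/4 ± √(a1^2/16 - a3/a1). -/
open Polynomial

lemma expand_key (r s : ℂ) :
    ((X - C r) ^ 2 * (X - C s) ^ 2 : Polynomial ℂ)
      = X ^ 4 + C (-2*(r+s)) * X ^ 3 + C (r^2+4*r*s+s^2) * X ^ 2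
        + C (-2*r*s*(r+s)) * X + C (r^2*s^2) := by
  simp only [map_add, map_mul, map_neg, map_ofNat, map_pow]
  ring

lemma coeffs_eq (b3 b2 b1 b0 c3 c2 c1 c0 : ℂ)
    (hp : (X^4 + C b3*X^3 + C b2*X^2 + C b1*X + C b0 : Polynomial ℂ)
        = X^4 + C c3*X^3 + C c2*X^2 + C c1*X + C c0) :
    b3 = c3 ∧ b2 = c2 ∧ b1 = c1 ∧ b0 = c0 := by
  refine ⟨?_, ?_, ?_, ?_⟩
  · have := congrArg (fun p => coeff p 3) hp; simpa using this
  · have := congrArg (fun p => coeff p 2) hp; simpa using this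
  · have := congrArg (fun p => coeff p 1) hp; simpa using this
  · have := congrArg (fun p => coeff p 0) hp; simpa using this

/-- The complex quartic `x^4 + a1 x^3 + a2 x^2 + a3 x + a4` with `a1 ≠ 0` has two double
roots (factors as `(x-r)^2 (x-s)^2`) iff `4 a1 a2 = a1^3 + 8 a3` and `a1^2 a4 = a3^2`;
in this case the double roots are `-a1/4 ± √(a1^2/16 - a3/a1)`. -/
theorem stmt1 (a1 a2 a3 a4 : ℂ) (h : a1 ≠ 0) :
    ((∃ r s : ℂ,
        (X ^ 4 + C a1 * X ^ 3 + C a2 * X ^ 2 + C a3 * X + C a4 : Polynomial ℂ)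
          = (X - C r) ^ 2 * (X - C s) ^ 2)
      ↔ (4 * a1 * a2 = a1 ^ 3 + 8 * a3 ∧ a1 ^ 2 * a4 = a3 ^ 2))
    ∧ (4 * a1 * a2 = a1 ^ 3 + 8 * a3 → a1 ^ 2 * a4 = a3 ^ 2 →
        ∀ δ : ℂ, δ ^ 2 = a1 ^ 2 / 16 - a3 / a1 →
        (X ^ 4 + C a1 * X ^ 3 + C a2 * X ^ 2 + C a3 * X + C a4 : Polynomial ℂ)
          = (X - C (-a1 / 4 + δ)) ^ 2 * (X - C (-a1 / 4 - δ)) ^ 2) := by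
  have main : ∀ b1 b2 b3 b4 : ℂ, 4 * b1 * b2 = b1 ^ 3 + 8 * b3 → b1 ^ 2 * b4 = b3 ^ 2 →
      b1 ≠ 0 → ∀ δ : ℂ, δ ^ 2 = b1 ^ 2 / 16 - b3 / b1 →
      (X ^ 4 + C b1 * X ^ 3 + C b2 * X ^ 2 + C b3 * X + C b4 : Polynomial ℂ)
        = (X - C (-b1 / 4 + δ)) ^ 2 * (X - C (-b1 / 4 - δ)) ^ 2 := by
    intro b1 b2 b3 b4 h1 h2 hb δ hδ
    rw [expand_key]
    have hδ' : b1 * δ ^ 2 = b1 ^ 3 / 16 - b3 := by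
      rw [hδ]; field_simp
    have e3 : -2*((-b1/4+δ)+(-b1/4-δ)) = b1 := by ring
    have e2 : (-b1/4+δ)^2+4*(-b1/4+δ)*(-b1/4-δ)+(-b1/4-δ)^2 = b2 := by
      have key : (4*b1) * ((-b1/4+δ)^2+4*(-b1/4+δ)*(-b1/4-δ)+(-b1/4-δ)^2) = (4*b1) * b2 := by
        linear_combination -8*hδ' - h1
      exact mul_left_cancel₀ (mul_ne_zero (by norm_num) hb) key
    have e1 : -2*(-b1/4+δ)*(-b1/4-δ)*((-b1/4+δ)+(-b1/4-δ)) = b3 := by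
      have key : b1 * (-2*(-b1/4+δ)*(-b1/4-δ)*((-b1/4+δ)+(-b1/4-δ))) = b1 * b3 := by
        linear_combination -b1*hδ'
      exact mul_left_cancel₀ hb key
    have e0 : (-b1/4+δ)^2*(-b1/4-δ)^2 = b4 := by
      have key : b1^2 * ((-b1/4+δ)^2*(-b1/4-δ)^2) = b1^2 * b4 := by
        linear_combination (-(b1*((-b1/4+δ)*(-b1/4-δ)) + b3))*hδ' - h2
      exact mul_left_cancel₀ (pow_ne_zero 2 hb) key
    rw [e3, e2, e1, e0]
  constructor
  · constructor
    · rintro ⟨r, s, heq⟩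
      rw [expand_key] at heq
      obtain ⟨c3, c2, c1, c0⟩ := coeffs_eq _ _ _ _ _ _ _ _ heq
      subst c3 c2 c1 c0
      constructor <;> ring
    · rintro ⟨h1, h2⟩
      obtain ⟨δ, hδ⟩ := IsAlgClosed.exists_pow_nat_eq (a1 ^ 2 / 16 - a3 / a1) (n := 2) (by norm_num)
      exact ⟨-a1/4+δ, -a1/4-δ, main a1 a2 a3 a4 h1 h2 h δ hδ⟩
  · intro h1 h2 δ hδ
    exact main a1 a2 a3 a4 h1 h2 h δ hδ
end

section
/- Let Q(y0,y1) be a real quadratic form, a > 0, and let F(y0,y1,y2,y3) = (y2*y3 + Q(y0,y1))^2 - y0*y1*(y0+y1)*(y0 - a*y1). Then the point (0:0:0:1) is a singular point of the surface B = {F = 0} ⊂ CP^3, i.e. all four partial derivatives of F vanish there, and moreover it is the only singular point of B in the affine chart y3 ≠ 0 other than possibly points with y2 = y3 = 0. -/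
/-- The affine equation of the quartic surface `B` in the chart `y3 ≠ 0`, with
`Q(y0,y1) = b y0^2 + c y0 y1 + d y1^2` a real quadratic form and `a > 0`. -/
noncomputable def quarticF (a b c d : ℝ) (x0 x1 x2 : ℂ) : ℂ :=
  (x2 + ((b : ℂ) * x0 ^ 2 + (c : ℂ) * x0 * x1 + (d : ℂ) * x1 ^ 2)) ^ 2
    - x0 * x1 * (x0 + x1) * (x0 - (a : ℂ) * x1)

/-!
Write `F = w ^ 2 - P` with `w = x2 + Q(x0, x1)` and `P = x0 x1 (x0 + x1) (x0 - a x1)`.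
Since `∂F/∂x2 = 2 w`, a singular point has `w = 0`, and there `F = -P` and `∇F = -∇P`.
As `a > 0`, `P` is a product of four pairwise non-proportional linear forms: on the line where
one of them vanishes, `∇P` is the product of the other three times a constant vector, and that
product restricts to a nonzero multiple of a cube.
-/

theorem eq_zero_of_quartic_and_partials_eq_zero {K : Type*} [Field K] {a x y : K} (ha : a ≠ 0)
    (ha' : 1 + a ≠ 0) (hP : x * y * (x + y) * (x - a * y) = 0)
    (hPx : y * (3 * x ^ 2 + 2 * (1 - a) * x * y - a * y ^ 2) = 0)
    (hPy : x * (x ^ 2 + 2 * (1 - a) * x * y - 3 * a * y ^ 2) = 0) : x = 0 ∧ y = 0 := by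
  rcases mul_eq_zero.1 hP with hP | hxay
  rcases mul_eq_zero.1 hP with hP | hxy
  rcases mul_eq_zero.1 hP with rfl | rfl
  · have : -a * y ^ 3 = 0 := by linear_combination hPx
    simp_all
  · have : x ^ 3 = 0 := by linear_combination hPy
    simp_all
  · obtain rfl : y = -x := by linear_combination hxy
    have : (1 + a) * x ^ 3 = 0 := by linear_combination -hPy
    simp_all
  · obtain rfl : x = a * y := by linear_combination hxay
    have : a * (1 + a) * y ^ 3 = 0 := by linear_combination hPx
    simp_all

section Partials

variable (a b c d : ℝ) (x0 x1 x2 : ℂ)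

theorem hasDerivAt_quarticF_x0 :
    HasDerivAt (fun t => quarticF a b c d t x1 x2)
      (2 * (x2 + ((b : ℂ) * x0 ^ 2 + (c : ℂ) * x0 * x1 + (d : ℂ) * x1 ^ 2)) * (2 * b * x0 + c * x1)
        - x1 * (3 * x0 ^ 2 + 2 * (1 - a) * x0 * x1 - a * x1 ^ 2)) x0 := by
  have hQ := ((((hasDerivAt_pow 2 x0).const_mul (b : ℂ)).fun_add
    (((hasDerivAt_id' x0).const_mul (c : ℂ)).mul_const x1)).add_const ((d : ℂ) * x1 ^ 2)).const_add x2
  have hP := (((hasDerivAt_id' x0).mul_const x1).fun_mul ((hasDerivAt_id' x0).add_const x1)).fun_mul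
    ((hasDerivAt_id' x0).sub_const ((a : ℂ) * x1))
  exact ((hQ.fun_pow 2).sub hP).congr_deriv (by ring)

theorem hasDerivAt_quarticF_x1 :
    HasDerivAt (fun t => quarticF a b c d x0 t x2)
      (2 * (x2 + ((b : ℂ) * x0 ^ 2 + (c : ℂ) * x0 * x1 + (d : ℂ) * x1 ^ 2)) * (c * x0 + 2 * d * x1)
        - x0 * (x0 ^ 2 + 2 * (1 - a) * x0 * x1 - 3 * a * x1 ^ 2)) x1 := by
  have hQ := ((((hasDerivAt_id' x1).const_mul ((c : ℂ) * x0)).const_add ((b : ℂ) * x0 ^ 2)).fun_add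
    ((hasDerivAt_pow 2 x1).const_mul (d : ℂ))).const_add x2
  have hP := (((hasDerivAt_id' x1).const_mul x0).fun_mul ((hasDerivAt_id' x1).const_add x0)).fun_mul
    (((hasDerivAt_id' x1).const_mul (a : ℂ)).const_sub x0)
  exact ((hQ.fun_pow 2).sub hP).congr_deriv (by ring)

theorem hasDerivAt_quarticF_x2 :
    HasDerivAt (fun t => quarticF a b c d x0 x1 t)
      (2 * (x2 + ((b : ℂ) * x0 ^ 2 + (c : ℂ) * x0 * x1 + (d : ℂ) * x1 ^ 2))) x2 :=
  ((((hasDerivAt_id' x2).add_const _).fun_pow 2).sub_const _).congr_deriv (by ring)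

end Partials

/-- The point `(0:0:0:1)` is a singular point of `B = {F = 0}` (the function and all
partial derivatives vanish there), and it is the only singular point of `B` in the
affine chart `y3 ≠ 0`. -/
theorem stmt3 (a b c d : ℝ) (ha : 0 < a) :
    (quarticF a b c d 0 0 0 = 0 ∧
      deriv (fun t => quarticF a b c d t 0 0) 0 = 0 ∧
      deriv (fun t => quarticF a b c d 0 t 0) 0 = 0 ∧
      deriv (fun t => quarticF a b c d 0 0 t) 0 = 0)
    ∧ ∀ x0 x1 x2 : ℂ,
        quarticF a b c d x0 x1 x2 = 0 →
        deriv (fun t => quarticF a b c d t x1 x2) x0 = 0 →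
        deriv (fun t => quarticF a b c d x0 t x2) x1 = 0 →
        deriv (fun t => quarticF a b c d x0 x1 t) x2 = 0 →
        x0 = 0 ∧ x1 = 0 ∧ x2 = 0 := by
  refine ⟨⟨by simp [quarticF], ?_, ?_, ?_⟩, fun x0 x1 x2 hF h0 h1 h2 => ?_⟩
  · simp [(hasDerivAt_quarticF_x0 a b c d 0 0 0).deriv]
  · simp [(hasDerivAt_quarticF_x1 a b c d 0 0 0).deriv]
  · simp [(hasDerivAt_quarticF_x2 a b c d 0 0 0).deriv]
  rw [(hasDerivAt_quarticF_x0 ..).deriv] at h0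
  rw [(hasDerivAt_quarticF_x1 ..).deriv] at h1
  rw [(hasDerivAt_quarticF_x2 ..).deriv] at h2
  have hw : x2 + ((b : ℂ) * x0 ^ 2 + (c : ℂ) * x0 * x1 + (d : ℂ) * x1 ^ 2) = 0 := by
    linear_combination h2 / 2
  rw [quarticF, hw] at hF
  rw [hw] at h0 h1
  have ha0 : (a : ℂ) ≠ 0 := by exact_mod_cast ha.ne'
  have ha1 : 1 + (a : ℂ) ≠ 0 := by exact_mod_cast (by positivity : (1 + a) ≠ 0)
  obtain ⟨rfl, rfl⟩ := eq_zero_of_quartic_and_partials_eq_zero (x := x0) (y := x1) ha0 ha1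
    (by linear_combination -hF) (by linear_combination -h0) (by linear_combination -h1)
  exact ⟨rfl, rfl, by simpa using hw⟩
end

section
/- Let Q be a real quadratic form, a > 0, f(λ) = λ(λ+1)(λ−a). Suppose Q(λ,1)^2 − f(λ) ≥ 0 for all real λ, with equality only at λ = λ₀, and suppose that for every real λ ≠ λ₀ with f(λ) ≥ 0 one has Q(λ,1) > √(f(λ)). Then for every real triple (v0, v2, v3) with v0 ∈ ℝ, v3 = conj(v2), and (v0,v2,v3) ≠ (λ₀,0,0), the inequality (v2*v3 + Q(v0,1))^2 − f(v0) > 0 holds. -/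
/-- Under Condition (A) (`Q(λ,1)^2 - f(λ) ≥ 0` with equality only at `λ₀`, and
`Q(λ,1) > √(f(λ))` whenever `f(λ) ≥ 0`, `λ ≠ λ₀`), for every real point
`(v0, v2, conj v2) ≠ (λ₀, 0, 0)` one has `(|v2|^2 + Q(v0,1))^2 - f(v0) > 0`.
Here `v2 * v3 = |v2|^2 = Complex.normSq v2` since `v3 = conj v2`. -/
theorem stmt5 (a b c d : ℝ) (ha : 0 < a) (l0 : ℝ)
    (Q : ℝ → ℝ) (hQ : ∀ l, Q l = b * l ^ 2 + c * l + d)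
    (f : ℝ → ℝ) (hf : ∀ l, f l = l * (l + 1) * (l - a))
    (h1 : ∀ l : ℝ, 0 ≤ Q l ^ 2 - f l)
    (h2 : ∀ l : ℝ, l ≠ l0 → 0 < Q l ^ 2 - f l)
    (h3 : Q l0 ^ 2 = f l0)
    (h4 : ∀ l : ℝ, l ≠ l0 → 0 ≤ f l → Real.sqrt (f l) < Q l) :
    ∀ (v0 : ℝ) (v2 : ℂ), (v0, v2) ≠ (l0, 0) →
      0 < (Complex.normSq v2 + Q v0) ^ 2 - f v0 := by
  have hQc : Continuous Q := by rw [funext hQ]; fun_prop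
  have hfc : Continuous f := by rw [funext hf]; fun_prop
  -- Q l0 ≥ 0
  have hQ0 : 0 ≤ Q l0 := by
    by_contra hneg
    push_neg at hneg
    have hfl0 : 0 < f l0 := by
      have : Q l0 ≠ 0 := ne_of_lt hneg
      nlinarith [sq_nonneg (Q l0)]
    have e1 : ∀ᶠ l in nhds l0, 0 < f l :=
      (hfc.tendsto l0).eventually (eventually_gt_nhds hfl0)
    have e2 : ∀ᶠ l in nhds l0, Q l < 0 :=
      (hQc.tendsto l0).eventually (eventually_lt_nhds hneg)
    have e3 : ∀ᶠ l in nhdsWithin l0 {l0}ᶜ, (0 < f l ∧ Q l < 0) ∧ l ≠ l0 :=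
      (((e1.and e2).filter_mono nhdsWithin_le_nhds).and self_mem_nhdsWithin)
    obtain ⟨l, ⟨⟨hfl, hQl⟩, hlne⟩⟩ := e3.exists
    have := h4 l hlne hfl.le
    have := Real.sqrt_nonneg (f l)
    linarith
  intro v0 v2 hne
  by_cases hv2 : v2 = 0
  · have hv0 : v0 ≠ l0 := by
      intro h; apply hne; rw [h, hv2]
    simp only [hv2, Complex.normSq_zero, zero_add]
    exact h2 v0 hv0
  · have ht : 0 < Complex.normSq v2 := Complex.normSq_pos.mpr hv2
    by_cases hf0 : 0 ≤ f v0
    · by_cases hv0 : v0 = l0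
      · subst hv0
        nlinarith
      · have h5 := h4 v0 hv0 hf0
        have h6 := Real.sqrt_nonneg (f v0)
        have h7 := Real.sq_sqrt hf0
        nlinarith
    · push_neg at hf0
      nlinarith [sq_nonneg (Complex.normSq v2 + Q v0)]
end

section
/- Let Q and f be real numbers with f > 0 and Q > √f (so in particular Q^2 − f > 0). Then for all real y1, complex y2, and all real θ, if (y1, y2) ≠ (0,0) then (Q^2 − f)·y1^2 + Q·|y2|^2 + √f · Re(e^{iθ}·y2^2) > 0. Consequently the conic 2(Q^2−f)y1^2 + √f·e^{iθ}y2^2 + 2Q·y2y3 + √f·e^{−iθ}y3^2 = 0 has no real points with respect to the real structure (y1:y2:y3) ↦ (conj y1 : conj y3 : conj y2). -/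
/-! A real point of the conic can be rescaled to the form `(a : z : conj z)` with `a` real:
if `(conj y1, conj y3, conj y2) = c y` then `|c| = 1`, and multiplying `y` by a square root
of `c` makes it fixed by this involution. At such a point the conic equals twice the real form
`(Q² - f) a² + Q |z|² + √f Re(e^{iθ} z²)`, which is positive since
`√f Re(e^{iθ} z²) ≥ -√f |z|²` and `Q > √f`. -/

open Complex ComplexConjugate

theorem neg_normSq_le_re_exp_mul_I_mul_sq (θ : ℝ) (z : ℂ) :
    -normSq z ≤ (exp (θ * I) * z ^ 2).re := by
  have hnorm : ‖exp (θ * I) * z ^ 2‖ = normSq z := by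
    rw [norm_mul, norm_exp_ofReal_mul_I, one_mul, norm_pow, Complex.sq_norm]
  linarith [neg_abs_le (exp (θ * I) * z ^ 2).re, abs_re_le_norm (exp (θ * I) * z ^ 2)]

theorem quadratic_form_pos {A Q s : ℝ} (hA : 0 < A) (hs : 0 ≤ s) (hsQ : s < Q)
    {y1 : ℝ} {y2 : ℂ} (θ : ℝ) (hy : ¬(y1 = 0 ∧ y2 = 0)) :
    0 < A * y1 ^ 2 + Q * normSq y2 + s * (exp (θ * I) * y2 ^ 2).re := by
  have hlow : A * y1 ^ 2 + (Q - s) * normSq y2 ≤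
      A * y1 ^ 2 + Q * normSq y2 + s * (exp (θ * I) * y2 ^ 2).re := by
    nlinarith [mul_le_mul_of_nonneg_left (neg_normSq_le_re_exp_mul_I_mul_sq θ y2) hs]
  have hQs : 0 < Q - s := sub_pos.mpr hsQ
  refine lt_of_lt_of_le ?_ hlow
  rcases not_and_or.mp hy with hy1 | hy2
  · have := normSq_nonneg y2
    positivity
  · have := normSq_pos.mpr hy2
    positivity

theorem normSq_eq_one_of_conj_eq_mul {c x y : ℂ} (hx : x ≠ 0)
    (hxy : conj x = c * y) (hyx : conj y = c * x) : normSq c = 1 := by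
  have hx' : x = (conj c * c) * x := by
    calc x = conj (conj x) := (conj_conj x).symm
      _ = (conj c * c) * x := by rw [hxy, map_mul, hyx]; ring
  have hcc : conj c * c = 1 := by
    simpa using mul_right_cancel₀ hx (hx'.symm.trans (one_mul x).symm)
  exact_mod_cast normSq_eq_conj_mul_self.trans hcc

theorem exists_conj_mul_eq_of_normSq_eq_one {c : ℂ} (hc : normSq c = 1) :
    ∃ l : ℂ, l ≠ 0 ∧ conj l * c = l := by
  obtain ⟨l, rfl⟩ : ∃ l : ℂ, l ^ 2 = c := IsAlgClosed.exists_pow_nat_eq c two_pos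
  have hl : normSq l = 1 := by
    rw [map_pow] at hc
    nlinarith [normSq_nonneg l]
  refine ⟨l, fun h => by simp [h] at hl, ?_⟩
  have hml : conj l * l = 1 := by exact_mod_cast normSq_eq_conj_mul_self.symm.trans (by simp [hl])
  linear_combination l * hml

noncomputable def conic (A Q s θ : ℝ) (y1 y2 y3 : ℂ) : ℂ :=
  2 * A * y1 ^ 2 + s * exp (θ * I) * y2 ^ 2 + 2 * Q * y2 * y3 + s * exp (-(θ * I)) * y3 ^ 2

theorem conic_mul (A Q s θ : ℝ) (l y1 y2 y3 : ℂ) :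
    conic A Q s θ (l * y1) (l * y2) (l * y3) = l ^ 2 * conic A Q s θ y1 y2 y3 := by
  unfold conic; ring

theorem conic_ofReal_conj (A Q s θ a : ℝ) (z : ℂ) :
    conic A Q s θ a z (conj z) =
      (2 * (A * a ^ 2 + Q * normSq z + s * (exp (θ * I) * z ^ 2).re) : ℝ) := by
  set w := exp (θ * I) * z ^ 2
  have hw : conj w = exp (-(θ * I)) * conj z ^ 2 := by
    simp only [w, map_mul, map_pow, ← exp_conj, conj_ofReal, conj_I, mul_neg]
  have hre : w + conj w = 2 * w.re := by exact_mod_cast add_conj w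
  unfold conic
  push_cast
  linear_combination -s * hw + s * hre + 2 * Q * mul_conj z

theorem conic_ofReal_conj_ne_zero {A Q s : ℝ} (hA : 0 < A) (hs : 0 ≤ s) (hsQ : s < Q)
    (θ : ℝ) {a : ℝ} {z : ℂ} (h : ¬(a = 0 ∧ z = 0)) : conic A Q s θ a z (conj z) ≠ 0 := by
  rw [conic_ofReal_conj, ofReal_ne_zero]
  exact mul_ne_zero two_ne_zero (quadratic_form_pos hA hs hsQ θ h).ne'

theorem exists_mul_real_of_conj_swap_eq_mul {c y1 y2 y3 : ℂ} (hy : (y1, y2, y3) ≠ (0, 0, 0))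
    (h1 : conj y1 = c * y1) (h3 : conj y3 = c * y2) (h2 : conj y2 = c * y3) :
    ∃ l : ℂ, l ≠ 0 ∧ ∃ a : ℝ, l * y1 = a ∧ l * y3 = conj (l * y2) := by
  have hc : normSq c = 1 := by
    by_cases hy1 : y1 = 0
    · by_cases hy2 : y2 = 0
      · have hy3 : y3 ≠ 0 := fun hy3 => hy (by simp [hy1, hy2, hy3])
        exact normSq_eq_one_of_conj_eq_mul hy3 h3 h2
      · exact normSq_eq_one_of_conj_eq_mul hy2 h2 h3
    · exact normSq_eq_one_of_conj_eq_mul hy1 h1 h1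
  obtain ⟨l, hl, hlc⟩ := exists_conj_mul_eq_of_normSq_eq_one hc
  refine ⟨l, hl, (l * y1).re, ?_, ?_⟩
  · exact (conj_eq_iff_re.mp (by rw [map_mul, h1, ← mul_assoc, hlc])).symm
  · rw [map_mul, h2, ← mul_assoc, hlc]

theorem stmt6_general (Q f : ℝ) (hQ : Real.sqrt f < Q) :
    (∀ (y1 : ℝ) (y2 : ℂ) (θ : ℝ), ¬(y1 = 0 ∧ y2 = 0) →
      0 < (Q ^ 2 - f) * y1 ^ 2 + Q * Complex.normSq y2
          + Real.sqrt f * (Complex.exp ((θ : ℂ) * Complex.I) * y2 ^ 2).re)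
    ∧ ∀ θ : ℝ, ¬ ∃ y1 y2 y3 : ℂ, (y1, y2, y3) ≠ (0, 0, 0) ∧
        2 * ((Q : ℂ) ^ 2 - (f : ℂ)) * y1 ^ 2
          + (Real.sqrt f : ℂ) * Complex.exp ((θ : ℂ) * Complex.I) * y2 ^ 2
          + 2 * (Q : ℂ) * y2 * y3
          + (Real.sqrt f : ℂ) * Complex.exp (-((θ : ℂ) * Complex.I)) * y3 ^ 2 = 0 ∧
        ∃ c : ℂ, c ≠ 0 ∧ (starRingEnd ℂ) y1 = c * y1 ∧
          (starRingEnd ℂ) y3 = c * y2 ∧ (starRingEnd ℂ) y2 = c * y3 := by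
  have hs := Real.sqrt_nonneg f
  have hA : 0 < Q ^ 2 - f := sub_pos.mpr ((Real.sqrt_lt' (hs.trans_lt hQ)).mp hQ)
  refine ⟨fun y1 y2 θ hy => quadratic_form_pos hA hs hQ θ hy, ?_⟩
  rintro θ ⟨y1, y2, y3, hy, hconic, c, -, h1, h3, h2⟩
  obtain ⟨l, hl, a, ha, hl3⟩ := exists_mul_real_of_conj_swap_eq_mul hy h1 h3 h2
  have hconic' : conic (Q ^ 2 - f) Q (Real.sqrt f) θ y1 y2 y3 = 0 := by
    unfold conic
    push_cast
    exact hconic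
  have hzero := conic_mul (Q ^ 2 - f) Q (Real.sqrt f) θ l y1 y2 y3
  rw [hconic', mul_zero, ha, hl3] at hzero
  refine conic_ofReal_conj_ne_zero hA hs hQ θ (fun ⟨ha0, hz2⟩ => hy ?_) hzero
  have hz1 : l * y1 = 0 := by rw [ha, ha0, ofReal_zero]
  have hz3 : l * y3 = 0 := by rw [hl3, hz2, map_zero]
  simp only [mul_eq_zero_iff_left hl] at hz1 hz2 hz3
  rw [hz1, hz2, hz3]

/-- If `f > 0` and `Q > √f`, then for `(y1, y2) ≠ (0,0)` (`y1` real, `y2` complex)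
and any real `θ`, `(Q^2 - f) y1^2 + Q |y2|^2 + √f Re(e^{iθ} y2^2) > 0`.
Consequently the conic `2(Q^2-f)y1^2 + √f e^{iθ} y2^2 + 2Q y2 y3 + √f e^{-iθ} y3^2 = 0`
has no real points with respect to the real structure
`(y1:y2:y3) ↦ (conj y1 : conj y3 : conj y2)`. -/
theorem stmt6 (Q f : ℝ) (hf : 0 < f) (hQ : Real.sqrt f < Q) :
    (∀ (y1 : ℝ) (y2 : ℂ) (θ : ℝ), ¬(y1 = 0 ∧ y2 = 0) →
      0 < (Q ^ 2 - f) * y1 ^ 2 + Q * Complex.normSq y2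
          + Real.sqrt f * (Complex.exp ((θ : ℂ) * Complex.I) * y2 ^ 2).re)
    ∧ ∀ θ : ℝ, ¬ ∃ y1 y2 y3 : ℂ, (y1, y2, y3) ≠ (0, 0, 0) ∧
        2 * ((Q : ℂ) ^ 2 - (f : ℂ)) * y1 ^ 2
          + (Real.sqrt f : ℂ) * Complex.exp ((θ : ℂ) * Complex.I) * y2 ^ 2
          + 2 * (Q : ℂ) * y2 * y3
          + (Real.sqrt f : ℂ) * Complex.exp (-((θ : ℂ) * Complex.I)) * y3 ^ 2 = 0 ∧
        ∃ c : ℂ, c ≠ 0 ∧ (starRingEnd ℂ) y1 = c * y1 ∧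
          (starRingEnd ℂ) y3 = c * y2 ∧ (starRingEnd ℂ) y2 = c * y3 :=
  stmt6_general Q f hQ
end

section
/- Let Q and f be real numbers with f < 0 (so Q^2 − f > 0 and √(Q^2−f) − Q > 0 and √(Q^2−f) + Q > 0). Then for all real y1 and complex y2, if (y1,y2) ≠ (0,0) then √(Q^2−f)·y1^2 + √(2(√(Q^2−f) − Q))·y1·Re(e^{iθ}·y2) + |y2|^2 > 0 for every real θ. -/
/-- If `f < 0` (so `Q^2 - f > 0`, `√(Q^2-f) - Q > 0`, `√(Q^2-f) + Q > 0`), then for all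
real `y1`, complex `y2` with `(y1,y2) ≠ (0,0)`, and all real `θ`:
`√(Q^2-f) y1^2 + √(2(√(Q^2-f) - Q)) y1 Re(e^{iθ} y2) + |y2|^2 > 0`. -/
theorem stmt7 (Q f : ℝ) (hf : f < 0) :
    ∀ (y1 : ℝ) (y2 : ℂ) (θ : ℝ), ¬(y1 = 0 ∧ y2 = 0) →
      0 < Real.sqrt (Q ^ 2 - f) * y1 ^ 2
          + Real.sqrt (2 * (Real.sqrt (Q ^ 2 - f) - Q)) * y1
              * (Complex.exp ((θ : ℂ) * Complex.I) * y2).re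
          + Complex.normSq y2 := by
  intro y1 y2 θ h
  set S := Real.sqrt (Q ^ 2 - f) with hS
  have hQf : (0:ℝ) < Q ^ 2 - f := by nlinarith [sq_nonneg Q]
  have hS2 : S ^ 2 = Q ^ 2 - f := Real.sq_sqrt hQf.le
  have hSpos : 0 < S := Real.sqrt_pos.mpr hQf
  have hSQ : |Q| < S := by
    have : Q ^ 2 < S ^ 2 := by nlinarith
    exact abs_lt_of_sq_lt_sq this hSpos.le
  have hSmQ : 0 < S - Q := by
    have := abs_lt.mp hSQ
    linarith [this.2]
  have hSpQ : 0 < S + Q := by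
    have := abs_lt.mp hSQ
    linarith [this.1]
  set a := Real.sqrt (2 * (S - Q)) with ha
  have ha2 : a ^ 2 = 2 * (S - Q) := Real.sq_sqrt (by linarith)
  have hann : 0 ≤ a := Real.sqrt_nonneg _
  set z := Complex.exp ((θ : ℂ) * Complex.I) * y2 with hz
  set r := z.re with hr
  have hnz : Complex.normSq z = Complex.normSq y2 := by
    rw [hz, Complex.normSq_mul, Complex.normSq_eq_norm_sq, Complex.norm_exp_ofReal_mul_I]
    ring
  have hrle : r ^ 2 ≤ Complex.normSq y2 := by
    rw [← hnz, Complex.normSq_apply, hr]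
    nlinarith [sq_nonneg z.im]
  rcases eq_or_ne y1 0 with h1 | h1
  · have h2 : y2 ≠ 0 := fun hy => h ⟨h1, hy⟩
    have : 0 < Complex.normSq y2 := Complex.normSq_pos.mpr h2
    simpa [h1] using h2
  · have h1' : 0 < y1 ^ 2 := by positivity
    nlinarith [sq_nonneg (2 * r + a * y1), mul_pos hSpQ h1', Complex.normSq_nonneg y2]
end
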